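/- Define 𝓡₁(u,v) = (1/√2)·(1+u²+v²)/(1+u²) and 𝓡₂(u,v) = (1/√2)·1/(1+u²). Then (i) for all (u,v) ∈ ℝ², the Jacobian determinant satisfies (∂𝓡₁/∂u)(∂𝓡₂/∂v) − (∂𝓡₁/∂v)(∂𝓡₂/∂u) = 2uv/(1+u²)³; and (ii) the function (u,v) ↦ 2uv/(1+u²)³ is not integrable over the open first quadrant (0,∞)×(0,∞), i.e. ∫₀^∞∫₀^∞ 2uv/(1+u²)³ du dv = +∞. Consequently the exceptional Taub-NUT instanton has infinite L² Ricci curvature energy. -/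

import Mathlib

/-!
Since `RicE2` does not depend on `v`, the Jacobian reduces to `-∂ᵥRicE1 · ∂ᵤRicE2`, a direct
computation. The density factors as `v · 2u/(1+u²)³`, and `-1/(2(1+u²)²)` is an antiderivative
of the second factor, so the inner integral is `v/2`; the outer integral `∫₀^∞ v/2 dv` diverges,
and Tonelli transfers this divergence to the product measure, which rules out integrability.
-/

open Real MeasureTheory

/-- The first Ricci potential of the exceptional Taub-NUT instanton. -/
noncomputable def RicE1 (u v : ℝ) : ℝ :=
  (1 / Real.sqrt 2) * (1 + u ^ 2 + v ^ 2) / (1 + u ^ 2)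

/-- The second Ricci potential of the exceptional Taub-NUT instanton. -/
noncomputable def RicE2 (u v : ℝ) : ℝ :=
  (1 / Real.sqrt 2) * 1 / (1 + u ^ 2)

open Set Filter Topology ENNReal

theorem hasDerivAt_one_add_sq (u : ℝ) : HasDerivAt (fun t : ℝ => 1 + t ^ 2) (2 * u) u := by
  simpa using (hasDerivAt_pow 2 u).const_add 1

theorem hasDerivAt_RicE1_fst (u v : ℝ) :
    HasDerivAt (fun t => RicE1 t v) (-(2 * u * v ^ 2) / (√2 * (1 + u ^ 2) ^ 2)) u := by
  have hpos : (0 : ℝ) < 1 + u ^ 2 := by positivity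
  refine (((hasDerivAt_one_add_sq u).add_const (v ^ 2)).const_mul (1 / √2)).div
    (hasDerivAt_one_add_sq u) hpos.ne' |>.congr_deriv ?_
  field_simp
  ring

theorem hasDerivAt_RicE1_snd (u v : ℝ) :
    HasDerivAt (fun t => RicE1 u t) (2 * v / (√2 * (1 + u ^ 2))) v := by
  have hpos : (0 : ℝ) < 1 + u ^ 2 := by positivity
  refine ((((hasDerivAt_pow 2 v).const_add (1 + u ^ 2)).const_mul (1 / √2)).div_const
    (1 + u ^ 2)).congr_deriv ?_
  field_simp
  ring

theorem hasDerivAt_RicE2_fst (u v : ℝ) :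
    HasDerivAt (fun t => RicE2 t v) (-(2 * u) / (√2 * (1 + u ^ 2) ^ 2)) u := by
  have hpos : (0 : ℝ) < 1 + u ^ 2 := by positivity
  refine ((hasDerivAt_const u (1 / √2 * 1)).div (hasDerivAt_one_add_sq u)
    hpos.ne').congr_deriv ?_
  field_simp
  ring

theorem deriv_RicE2_snd (u v : ℝ) : deriv (fun t => RicE2 u t) v = 0 :=
  deriv_const v _

theorem jacobian_RicE (u v : ℝ) :
    deriv (fun t => RicE1 t v) u * deriv (fun t => RicE2 u t) v
        - deriv (fun t => RicE1 u t) v * deriv (fun t => RicE2 t v) u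
      = 2 * u * v / (1 + u ^ 2) ^ 3 := by
  rw [(hasDerivAt_RicE1_fst u v).deriv, (hasDerivAt_RicE1_snd u v).deriv,
    (hasDerivAt_RicE2_fst u v).deriv, deriv_RicE2_snd]
  have hpos : (0 : ℝ) < 1 + u ^ 2 := by positivity
  field_simp
  rw [Real.sq_sqrt zero_le_two]
  ring

theorem hasDerivAt_neg_inv_one_add_sq_pow (n : ℕ) (u : ℝ) :
    HasDerivAt (fun t : ℝ => -((n + 1 : ℝ) * (1 + t ^ 2) ^ (n + 1))⁻¹)
      (2 * u / (1 + u ^ 2) ^ (n + 2)) u := by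
  have hpos : (0 : ℝ) < 1 + u ^ 2 := by positivity
  have hne : (n + 1 : ℝ) * (1 + u ^ 2) ^ (n + 1) ≠ 0 := by positivity
  refine ((((hasDerivAt_one_add_sq u).pow (n + 1)).const_mul ((n + 1 : ℝ))).inv hne).neg
    |>.congr_deriv ?_
  simp only [Pi.pow_apply, Nat.add_sub_cancel, Nat.cast_add, Nat.cast_one]
  field_simp
  ring

theorem tendsto_neg_inv_one_add_sq_pow_atTop (n : ℕ) :
    Tendsto (fun t : ℝ => -((n + 1 : ℝ) * (1 + t ^ 2) ^ (n + 1))⁻¹) atTop (𝓝 0) := by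
  have h : Tendsto (fun t : ℝ => 1 + t ^ 2) atTop atTop :=
    tendsto_atTop_add_const_left _ 1 (tendsto_pow_atTop two_ne_zero)
  simpa using ((tendsto_pow_atTop n.succ_ne_zero).comp h).const_mul_atTop
    (by positivity : (0 : ℝ) < n + 1) |>.inv_tendsto_atTop.neg

theorem lintegral_Ioi_two_mul_div_one_add_sq_pow (n : ℕ) :
    ∫⁻ u in Ioi (0 : ℝ), ENNReal.ofReal (2 * u / (1 + u ^ 2) ^ (n + 2))
      = ENNReal.ofReal (1 / ((n : ℝ) + 1)) := by
  have hderiv := fun x (_ : x ∈ Ici (0 : ℝ)) => hasDerivAt_neg_inv_one_add_sq_pow n x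
  have hnonneg : ∀ x ∈ Ioi (0 : ℝ), 0 ≤ 2 * x / (1 + x ^ 2) ^ (n + 2) := fun x hx => by
    have : (0 : ℝ) < x := hx
    positivity
  have hlim := tendsto_neg_inv_one_add_sq_pow_atTop n
  have hint : ∫ u in Ioi (0 : ℝ), 2 * u / (1 + u ^ 2) ^ (n + 2) = 1 / ((n : ℝ) + 1) := by
    rw [integral_Ioi_of_hasDerivAt_of_nonneg' hderiv hnonneg hlim]
    simp
  rw [← hint, ofReal_integral_eq_lintegral_ofReal
    (integrableOn_Ioi_deriv_of_nonneg' hderiv hnonneg hlim)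
    ((ae_restrict_iff' measurableSet_Ioi).2 (ae_of_all _ hnonneg))]

theorem lintegral_Ioi_ofReal_eq_top : ∫⁻ v in Ioi (0 : ℝ), ENNReal.ofReal v = ∞ := by
  refine eq_top_iff.2 ?_
  calc ∞ = ∫⁻ _ in Ioi (1 : ℝ), 1 := by simp
    _ ≤ ∫⁻ v in Ioi (1 : ℝ), ENNReal.ofReal v :=
      setLIntegral_mono' measurableSet_Ioi fun v hv => by simpa using le_of_lt hv
    _ ≤ ∫⁻ v in Ioi (0 : ℝ), ENNReal.ofReal v :=
      lintegral_mono_set (Ioi_subset_Ioi zero_le_one)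

theorem lintegral_Ioi_lintegral_Ioi_two_mul_mul_div_eq_top :
    ∫⁻ v in Ioi (0 : ℝ), ∫⁻ u in Ioi (0 : ℝ), ENNReal.ofReal (2 * u * v / (1 + u ^ 2) ^ 3)
      = ∞ := by
  have hinner : ∀ v ∈ Ioi (0 : ℝ),
      ∫⁻ u in Ioi (0 : ℝ), ENNReal.ofReal (2 * u * v / (1 + u ^ 2) ^ 3)
        = ENNReal.ofReal v * ENNReal.ofReal (1 / 2) := fun v hv => by
    have hsplit : ∀ u : ℝ, 2 * u * v / (1 + u ^ 2) ^ 3 = v * (2 * u / (1 + u ^ 2) ^ (1 + 2)) :=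
      fun u => by ring
    simp_rw [hsplit, ENNReal.ofReal_mul (le_of_lt hv)]
    rw [lintegral_const_mul' _ _ ofReal_ne_top, lintegral_Ioi_two_mul_div_one_add_sq_pow 1]
    norm_num
  rw [setLIntegral_congr_fun measurableSet_Ioi hinner, lintegral_mul_const' _ _ ofReal_ne_top,
    lintegral_Ioi_ofReal_eq_top, top_mul (by norm_num)]

theorem not_integrableOn_prod_of_lintegral_lintegral_eq_top {α β : Type*} [MeasurableSpace α]
    [MeasurableSpace β] {μ : Measure α} {ν : Measure β} [SFinite μ] [SFinite ν]
    {f : α × β → ℝ} {s : Set α} {t : Set β}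
    (h : ∫⁻ y in t, ∫⁻ x in s, ENNReal.ofReal (f (x, y)) ∂μ ∂ν = ∞) :
    ¬ IntegrableOn f (s ×ˢ t) (μ.prod ν) := fun hf => by
  have hfin := hf.setLIntegral_lt_top
  rw [setLIntegral_prod_symm _ hf.aestronglyMeasurable.aemeasurable.ennreal_ofReal, h] at hfin
  exact lt_irrefl _ hfin

/-- (i) The Jacobian determinant of the Ricci potentials equals `2uv/(1+u²)³`; (ii) this
Ricci pseudo-volume density is not integrable over the open first quadrant — its integral
is `+∞`. Consequently the exceptional Taub-NUT instanton has infinite L² Ricci energy. -/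
theorem stmt_19 :
    (∀ u v : ℝ,
      deriv (fun t => RicE1 t v) u * deriv (fun t => RicE2 u t) v
        - deriv (fun t => RicE1 u t) v * deriv (fun t => RicE2 t v) u
      = 2 * u * v / (1 + u ^ 2) ^ 3) ∧
    ¬ IntegrableOn (fun p : ℝ × ℝ => 2 * p.1 * p.2 / (1 + p.1 ^ 2) ^ 3)
        (Set.Ioi 0 ×ˢ Set.Ioi 0) ∧
    (∫⁻ v in Set.Ioi (0 : ℝ), ∫⁻ u in Set.Ioi (0 : ℝ),
        ENNReal.ofReal (2 * u * v / (1 + u ^ 2) ^ 3)) = ⊤ := by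
  refine ⟨jacobian_RicE, ?_, lintegral_Ioi_lintegral_Ioi_two_mul_mul_div_eq_top⟩
  rw [Measure.volume_eq_prod]
  exact not_integrableOn_prod_of_lintegral_lintegral_eq_top
    lintegral_Ioi_lintegral_Ioi_two_mul_mul_div_eq_top
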